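/- arXiv:1701.00050 — 2 statements merged into one kernel-verified Lean document; each statement's English description precedes it below -/
import Mathlib

section
/- (Clustering identity, general form.) With the three-region MERA setup below, for every operator O_{ACR} ∈ B(H_A ⊗ H_C ⊗ H_R), tr[(ρ_0^A ⊗ ρ_0^{CR}) O_{ACR}] = tr[(ρ_s^{A_s} ⊗ ρ_s^{C_sR}) (Φ_A ⊗ Φ_C ⊗ id_R)(O_{ACR})], where ρ_0^A = tr_{B,C,R} |ρ_0⟩⟨ρ_0|, ρ_0^{CR} = tr_{A,B} |ρ_0⟩⟨ρ_0|, ρ_s^{A_s} = tr_{B_s,C_s,R} |ρ_s⟩⟨ρ_s|, ρ_s^{C_sR} = tr_{A_s,B_s} |ρ_s⟩⟨ρ_s|, and Φ_A ⊗ Φ_C ⊗ id_R is the linear map determined by its values Φ_A(O_A) ⊗ Φ_C(O_C) ⊗ O_R on product operators. -/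
open scoped Kronecker ComplexOrder Matrix Classical

/-- The operator norm of a matrix, i.e. the norm of the induced linear map on Euclidean space. -/
noncomputable def opNorm {n : Type} [Fintype n] [DecidableEq n] (A : Matrix n n ℂ) : ℝ :=
  ‖Matrix.toEuclideanCLM (𝕜 := ℂ) A‖

/-- The positive-semidefinite square root (junk value `0` off the PSD cone). -/
noncomputable def psdSqrt {n : Type} [Fintype n] [DecidableEq n] (A : Matrix n n ℂ) :
    Matrix n n ℂ :=
  if h : A.PosSemidef then (h.1.eigenvectorUnitary : Matrix n n ℂ) *
      Matrix.diagonal ((↑) ∘ Real.sqrt ∘ h.1.eigenvalues) * (star h.1.eigenvectorUnitary : Matrix n n ℂ)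
    else 0

/-- The trace norm `‖A‖₁ = tr √(AᴴA)`. -/
noncomputable def traceNorm {n : Type} [Fintype n] [DecidableEq n] (A : Matrix n n ℂ) : ℝ :=
  ((psdSqrt (Aᴴ * A)).trace).re

/-- Fidelity `F(ρ,σ) = tr √(√ρ σ √ρ)`. -/
noncomputable def fidelity {n : Type} [Fintype n] [DecidableEq n] (ρ σ : Matrix n n ℂ) : ℝ :=
  ((psdSqrt (psdSqrt ρ * σ * psdSqrt ρ)).trace).re

/-- Bures distance `𝔅(ρ,σ) = √(2(1 − F(ρ,σ)))`. -/
noncomputable def bures {n : Type} [Fintype n] [DecidableEq n] (ρ σ : Matrix n n ℂ) : ℝ :=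
  Real.sqrt (2 * (1 - fidelity ρ σ))

/-- The rank-one projector `|ψ⟩⟨ψ|`. -/
def outer {n : Type} [Fintype n] (ψ : n → ℂ) : Matrix n n ℂ :=
  Matrix.of fun i j => ψ i * (starRingEnd ℂ) (ψ j)

/-- Complete positivity of a linear map between matrix algebras: for every `k`, the map
`id_{M_k} ⊗ Φ` (acting blockwise) preserves positive semidefiniteness. -/
def IsCompletelyPositive {n m : Type} [Fintype n] [DecidableEq n] [Fintype m] [DecidableEq m]
    (Φ : Matrix n n ℂ →ₗ[ℂ] Matrix m m ℂ) : Prop :=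
  ∀ (k : ℕ) (M : Matrix (Fin k × n) (Fin k × n) ℂ), M.PosSemidef →
    (Matrix.of fun (p q : Fin k × m) =>
      (Φ (Matrix.of fun a b => M (p.1, a) (q.1, b))) p.2 q.2).PosSemidef

/-!
Both sides are additive in `O_{ACR}`, so it suffices to compare them on product operators
`O_A ⊗ O_C ⊗ O_R`, where the trace factorises. The purification `|ρ_s⟩` is the vectorisation of a
matrix `W`, and then `|ρ_0⟩` is that of `V W`; each factor becomes a sandwich
`tr[(V W)ᴴ O (V W) ⋯]`, and the causal-cone condition pulls `O_A` (resp. `O_C`) through `V` at the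
cost of a factor `Φ_C(1)` (resp. `Φ_A(1)`). Since `V` is an isometry,
`Φ_A(1) ⊗ 1 ⊗ Φ_C(1) = V†V = 1`, so both are scalars whose product is `1`, and the defects cancel.
-/

namespace Matrix

variable {α M : Type*} {l m n p q r : Type*}

theorem addMonoidHom_ext_kronecker₃ [Semiring α] [AddCommMonoid M]
    [Finite l] [Finite m] [Finite n] [Finite p] [Finite q] [Finite r]
    [DecidableEq l] [DecidableEq m] [DecidableEq n] [DecidableEq p] [DecidableEq q]
    [DecidableEq r] {f g : Matrix (l × (n × q)) (m × (p × r)) α →+ M}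
    (h : ∀ (A : Matrix l m α) (B : Matrix n p α) (C : Matrix q r α),
      f (A ⊗ₖ (B ⊗ₖ C)) = g (A ⊗ₖ (B ⊗ₖ C))) : f = g := by
  refine DFunLike.ext _ _ fun X => ?_
  induction X using Matrix.induction_on' with
  | h_zero => simp only [map_zero]
  | h_add X Y hX hY => simp only [map_add, hX, hY]
  | h_std_basis i j x =>
    obtain ⟨a, b, c⟩ := i
    obtain ⟨a', b', c'⟩ := j
    have hsingle : single (a, (b, c)) (a', (b', c')) x
        = single a a' 1 ⊗ₖ (single b b' 1 ⊗ₖ single c c' x) := by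
      rw [single_kronecker_single, single_kronecker_single, one_mul, one_mul]
    rw [hsingle, h]

theorem exists_eq_smul_one_of_kronecker_eq_one {K : Type*} [Field K]
    [DecidableEq m] [DecidableEq n] [Nonempty m] [Nonempty n]
    {A : Matrix m m K} {B : Matrix n n K} (h : A ⊗ₖ B = 1) :
    ∃ a b : K, A = a • 1 ∧ B = b • 1 ∧ a * b = 1 := by
  obtain ⟨i₀⟩ := ‹Nonempty m›
  obtain ⟨j₀⟩ := ‹Nonempty n›
  have hAB : ∀ i i' j j', A i i' * B j j' = (1 : Matrix m m K) i i' * (1 : Matrix n n K) j j' :=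
    fun i i' j j' => by rw [← kronecker_apply, h, ← one_kronecker_one, kronecker_apply]
  have hab : A i₀ i₀ * B j₀ j₀ = 1 := by simpa using hAB i₀ i₀ j₀ j₀
  refine ⟨A i₀ i₀, B j₀ j₀, ?_, ?_, hab⟩
  · ext i i'
    refine mul_right_cancel₀ (right_ne_zero_of_mul_eq_one hab) ?_
    rw [hAB, smul_apply, smul_eq_mul, mul_right_comm, hab, one_mul, one_apply_eq, mul_one]
  · ext j j'
    refine mul_left_cancel₀ (left_ne_zero_of_mul_eq_one hab) ?_
    rw [hAB, smul_apply, smul_eq_mul, ← mul_assoc, hab, one_mul, one_apply_eq, one_mul]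

theorem eq_smul_one_of_one_kronecker_eq_smul_one {K : Type*} [CommSemiring K]
    [DecidableEq m] [DecidableEq n] [Nonempty m] {B : Matrix n n K} {b : K}
    (h : (1 : Matrix m m K) ⊗ₖ B = b • 1) : B = b • 1 := by
  obtain ⟨i₀⟩ := ‹Nonempty m›
  ext j j'
  have hentry := congr_fun₂ h (i₀, j) (i₀, j')
  rwa [kronecker_apply, one_apply_eq, one_mul, smul_apply, ← one_kronecker_one, kronecker_apply,
    one_apply_eq, one_mul, ← smul_apply] at hentry

theorem kronecker_mulVec_vec_transpose [CommSemiring α] [Fintype m] [Fintype p]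
    (A : Matrix l m α) (X : Matrix m p α) (B : Matrix n p α) :
    (A ⊗ₖ B) *ᵥ vec Xᵀ = vec (A * X * Bᵀ)ᵀ := by
  rw [kronecker_mulVec_vec, transpose_mul, transpose_mul, transpose_transpose, Matrix.mul_assoc]

theorem conjTranspose_mul_sandwich [Semiring α] [StarRing α] [Fintype m] [Fintype n]
    (V : Matrix m n α) (W : Matrix n p α) (N : Matrix m m α) :
    (V * W)ᴴ * N * (V * W) = Wᴴ * (Vᴴ * N * V) * W := by
  simp only [conjTranspose_mul, Matrix.mul_assoc]

end Matrix

open Matrix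

section TensorMapId

variable {𝕜 : Type*} [CommSemiring 𝕜] {l m n p q r l' m' n' p' : Type*}

def tensorMapId (Φ : Matrix l m 𝕜 →ₗ[𝕜] Matrix l' m' 𝕜) (Ψ : Matrix n p 𝕜 →ₗ[𝕜] Matrix n' p' 𝕜) :
    Matrix (l × (n × q)) (m × (p × r)) 𝕜 →ₗ[𝕜] Matrix (l' × (n' × q)) (m' × (p' × r)) 𝕜 where
  toFun O := of fun x y =>
    Ψ (of fun c e => Φ (of fun a b => O (a, (c, x.2.2)) (b, (e, y.2.2))) x.1 y.1) x.2.1 y.2.1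
  map_add' O O' := ext fun x y => by
    rw [of_apply, Matrix.add_apply, of_apply, of_apply, ← Matrix.add_apply, ← map_add]
    refine congrArg (fun M => Ψ M x.2.1 y.2.1) (ext fun c e => ?_)
    rw [of_apply, Matrix.add_apply, of_apply, of_apply, ← Matrix.add_apply, ← map_add]
    rfl
  map_smul' s O := ext fun x y => by
    rw [of_apply, RingHom.id_apply, Matrix.smul_apply, of_apply, ← Matrix.smul_apply, ← map_smul]
    refine congrArg (fun M => Ψ M x.2.1 y.2.1) (ext fun c e => ?_)
    rw [of_apply, Matrix.smul_apply, of_apply, ← Matrix.smul_apply, ← map_smul]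
    rfl

theorem tensorMapId_kronecker (Φ : Matrix l m 𝕜 →ₗ[𝕜] Matrix l' m' 𝕜)
    (Ψ : Matrix n p 𝕜 →ₗ[𝕜] Matrix n' p' 𝕜) (A : Matrix l m 𝕜) (B : Matrix n p 𝕜)
    (C : Matrix q r 𝕜) :
    tensorMapId Φ Ψ (A ⊗ₖ (B ⊗ₖ C)) = Φ A ⊗ₖ (Ψ B ⊗ₖ C) := by
  ext x y
  have hΦ : ∀ c e, Φ (of fun a b => A a b * (B c e * C x.2.2 y.2.2))
      = (B c e * C x.2.2 y.2.2) • Φ A := fun c e => by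
    rw [← map_smul]
    congr 1
    ext a b
    rw [of_apply, Matrix.smul_apply, smul_eq_mul, mul_comm]
  have hΨ : Ψ (of fun c e => B c e * C x.2.2 y.2.2 * Φ A x.1 y.1)
      = (C x.2.2 y.2.2 * Φ A x.1 y.1) • Ψ B := by
    rw [← map_smul]
    congr 1
    ext c e
    rw [of_apply, Matrix.smul_apply, smul_eq_mul]
    ring
  dsimp only [tensorMapId, LinearMap.coe_mk, AddHom.coe_mk]
  simp only [hΦ, hΨ, of_apply, Matrix.smul_apply, smul_eq_mul, kroneckerMap_apply]
  ring

end TensorMapId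

section ReducedStates

variable {α β γ ι : Type} [Fintype α] [Fintype β] [Fintype γ] [Fintype ι]

def traceOutBCR (ψ : (α × (β × γ)) × ι → ℂ) : Matrix α α ℂ :=
  of fun a a' => ∑ b : β, ∑ c : γ, ∑ r : ι, outer ψ ((a, (b, c)), r) ((a', (b, c)), r)

def traceOutAB (ψ : (α × (β × γ)) × ι → ℂ) : Matrix (γ × ι) (γ × ι) ℂ :=
  of fun p q => ∑ a : α, ∑ b : β, outer ψ ((a, (b, p.1)), p.2) ((a, (b, q.1)), q.2)

theorem trace_traceOutBCR_mul [DecidableEq β] [DecidableEq γ] (X : Matrix (α × (β × γ)) ι ℂ)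
    (M : Matrix α α ℂ) :
    (traceOutBCR (vec Xᵀ) * M).trace = (Xᴴ * (M ⊗ₖ (1 : Matrix (β × γ) (β × γ) ℂ)) * X).trace := by
  simp only [trace, traceOutBCR, outer, vec, transpose_apply, of_apply, diag_apply, mul_apply,
    Finset.sum_mul, conjTranspose_apply, RCLike.star_def, kroneckerMap_apply, one_apply, mul_ite,
    mul_one, mul_zero, Fintype.sum_prod_type, Finset.sum_ite_eq', Finset.mem_univ, ↓reduceIte]
  simp only [← Fintype.sum_prod_type']
  exact Fintype.sum_equiv
    ⟨fun x => (x.2.2.2.2, (x.1, (x.2.2.1, (x.2.2.2.1, x.2.1)))),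
      fun y => (y.2.1, (y.2.2.2.2, (y.2.2.1, (y.2.2.2.1, y.1)))), fun _ => rfl, fun _ => rfl⟩
    _ _ fun _ => by simp only [Equiv.coe_fn_mk]; ring

theorem trace_traceOutAB_mul [DecidableEq α] [DecidableEq β] (X : Matrix (α × (β × γ)) ι ℂ)
    (M : Matrix γ γ ℂ) (N : Matrix ι ι ℂ) :
    (traceOutAB (vec Xᵀ) * (M ⊗ₖ N)).trace
      = (Xᴴ * ((1 : Matrix α α ℂ) ⊗ₖ ((1 : Matrix β β ℂ) ⊗ₖ M)) * X * Nᵀ).trace := by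
  simp only [trace, traceOutAB, outer, vec, transpose_apply, of_apply, diag_apply, mul_apply,
    kroneckerMap_apply, Finset.sum_mul, Fintype.sum_prod_type, conjTranspose_apply, RCLike.star_def,
    one_apply, ite_mul, one_mul, zero_mul, mul_ite, mul_zero, Finset.sum_ite_irrel,
    Finset.sum_const_zero, Finset.sum_ite_eq', Finset.mem_univ, ↓reduceIte]
  simp only [← Fintype.sum_prod_type']
  exact Fintype.sum_equiv
    ⟨fun x => (x.2.2.2.1, (x.2.1, (x.2.2.2.2.1, (x.2.2.2.2.2, (x.1, x.2.2.1))))),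
      fun y => (y.2.2.2.2.1, (y.2.1, (y.2.2.2.2.2, (y.1, (y.2.2.1, y.2.2.2.1))))),
      fun _ => rfl, fun _ => rfl⟩
    _ _ fun _ => by simp only [Equiv.coe_fn_mk]; ring

end ReducedStates

section CausalCones

variable {A B C As Bs Cs ι : Type} [Fintype A] [Fintype B] [Fintype C] [DecidableEq B]
  [DecidableEq Bs]
  {V : Matrix (A × (B × C)) (As × (Bs × Cs)) ℂ}
  {ΦA : Matrix A A ℂ →ₗ[ℂ] Matrix As As ℂ} {ΦC : Matrix C C ℂ →ₗ[ℂ] Matrix Cs Cs ℂ}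

def NonOverlappingCausalCones (V : Matrix (A × (B × C)) (As × (Bs × Cs)) ℂ)
    (ΦA : Matrix A A ℂ →ₗ[ℂ] Matrix As As ℂ) (ΦC : Matrix C C ℂ →ₗ[ℂ] Matrix Cs Cs ℂ) : Prop :=
  ∀ (OA : Matrix A A ℂ) (OC : Matrix C C ℂ),
    Vᴴ * (OA ⊗ₖ ((1 : Matrix B B ℂ) ⊗ₖ OC)) * V = ΦA OA ⊗ₖ ((1 : Matrix Bs Bs ℂ) ⊗ₖ ΦC OC)

namespace NonOverlappingCausalCones

theorem exists_map_one_eq_smul_one [DecidableEq A] [DecidableEq C] [DecidableEq As]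
    [DecidableEq Cs] [Nonempty As] [Nonempty Bs] [Nonempty Cs]
    (h : NonOverlappingCausalCones V ΦA ΦC) (hV : Vᴴ * V = 1) :
    ∃ l m : ℂ, ΦA 1 = l • 1 ∧ ΦC 1 = m • 1 ∧ l * m = 1 := by
  have hone : ΦA 1 ⊗ₖ ((1 : Matrix Bs Bs ℂ) ⊗ₖ ΦC 1) = 1 := by
    rw [← h, one_kronecker_one, one_kronecker_one, Matrix.mul_one, hV]
  obtain ⟨l, m, hl, hm, hlm⟩ := exists_eq_smul_one_of_kronecker_eq_one hone
  exact ⟨l, m, hl, eq_smul_one_of_one_kronecker_eq_smul_one hm, hlm⟩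

theorem trace_traceOutBCR_mul [DecidableEq C] [DecidableEq Cs] [Fintype As] [Fintype Bs]
    [Fintype Cs] [Fintype ι] (h : NonOverlappingCausalCones V ΦA ΦC) {m : ℂ}
    (hm : ΦC 1 = m • 1) (W : Matrix (As × (Bs × Cs)) ι ℂ) (M : Matrix A A ℂ) :
    (traceOutBCR (vec (V * W)ᵀ) * M).trace = m * (traceOutBCR (vec Wᵀ) * ΦA M).trace := by
  have hsandwich : Vᴴ * (M ⊗ₖ (1 : Matrix (B × C) (B × C) ℂ)) * V
      = m • (ΦA M ⊗ₖ (1 : Matrix (Bs × Cs) (Bs × Cs) ℂ)) := by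
    rw [← one_kronecker_one, h, hm, kronecker_smul, kronecker_smul, one_kronecker_one]
  rw [_root_.trace_traceOutBCR_mul, _root_.trace_traceOutBCR_mul, conjTranspose_mul_sandwich,
    hsandwich, Matrix.mul_smul, Matrix.smul_mul, trace_smul, smul_eq_mul]

theorem trace_traceOutAB_mul [DecidableEq A] [DecidableEq As] [Fintype As] [Fintype Bs]
    [Fintype Cs] [Fintype ι] (h : NonOverlappingCausalCones V ΦA ΦC) {l : ℂ}
    (hl : ΦA 1 = l • 1) (W : Matrix (As × (Bs × Cs)) ι ℂ) (M : Matrix C C ℂ) (N : Matrix ι ι ℂ) :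
    (traceOutAB (vec (V * W)ᵀ) * (M ⊗ₖ N)).trace
      = l * (traceOutAB (vec Wᵀ) * (ΦC M ⊗ₖ N)).trace := by
  have hsandwich : Vᴴ * ((1 : Matrix A A ℂ) ⊗ₖ ((1 : Matrix B B ℂ) ⊗ₖ M)) * V
      = l • ((1 : Matrix As As ℂ) ⊗ₖ ((1 : Matrix Bs Bs ℂ) ⊗ₖ ΦC M)) := by
    rw [h, hl, smul_kronecker]
  rw [_root_.trace_traceOutAB_mul, _root_.trace_traceOutAB_mul, conjTranspose_mul_sandwich,
    hsandwich, Matrix.mul_smul, Matrix.smul_mul, Matrix.smul_mul, trace_smul, smul_eq_mul]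

theorem trace_traceOut_kronecker_mul [DecidableEq A] [DecidableEq C] [DecidableEq As]
    [DecidableEq Cs] [Fintype As] [Fintype Bs] [Fintype Cs] [Fintype ι] [DecidableEq ι]
    (h : NonOverlappingCausalCones V ΦA ΦC) (hV : Vᴴ * V = 1) (W : Matrix (As × (Bs × Cs)) ι ℂ)
    (O : Matrix (A × (C × ι)) (A × (C × ι)) ℂ) :
    ((traceOutBCR (vec (V * W)ᵀ) ⊗ₖ traceOutAB (vec (V * W)ᵀ)) * O).trace
      = ((traceOutBCR (vec Wᵀ) ⊗ₖ traceOutAB (vec Wᵀ)) * tensorMapId ΦA ΦC O).trace := by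
  rcases isEmpty_or_nonempty (As × (Bs × Cs)) with hempty | ⟨a, b, c⟩
  · have hW : W = 0 := ext fun i => isEmptyElim i
    simp only [trace, traceOutBCR, traceOutAB, outer, vec, hW, Matrix.mul_zero, transpose_apply,
      Matrix.zero_apply, map_zero, mul_zero, of_apply, Finset.sum_const_zero, diag_apply,
      mul_apply, kroneckerMap_apply, zero_mul]
  have : Nonempty As := ⟨a⟩
  have : Nonempty Bs := ⟨b⟩
  have : Nonempty Cs := ⟨c⟩
  obtain ⟨l, m, hl, hm, hlm⟩ := h.exists_map_one_eq_smul_one hV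
  suffices (traceAddMonoidHom _ ℂ).comp
        (AddMonoidHom.mulLeft (traceOutBCR (vec (V * W)ᵀ) ⊗ₖ traceOutAB (vec (V * W)ᵀ)))
      = (traceAddMonoidHom _ ℂ).comp ((AddMonoidHom.mulLeft
          (traceOutBCR (vec Wᵀ) ⊗ₖ traceOutAB (vec Wᵀ))).comp (tensorMapId ΦA ΦC).toAddMonoidHom)
    from DFunLike.congr_fun this O
  refine addMonoidHom_ext_kronecker₃ fun MA MC MR => ?_
  simp only [AddMonoidHom.comp_apply, AddMonoidHom.coe_mulLeft, traceAddMonoidHom_apply,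
    LinearMap.toAddMonoidHom_coe, tensorMapId_kronecker, ← mul_kronecker_mul, trace_kronecker,
    h.trace_traceOutBCR_mul hm, h.trace_traceOutAB_mul hl]
  linear_combination ((traceOutBCR (vec Wᵀ) * ΦA MA).trace
    * (traceOutAB (vec Wᵀ) * (ΦC MC ⊗ₖ MR)).trace) * hlm

end NonOverlappingCausalCones

end CausalCones

theorem mera_clustering_identity_general_general
    {A B C As Bs Cs : Type} [Fintype A] [DecidableEq A] [Fintype B] [DecidableEq B]
    [Fintype C] [DecidableEq C] [Fintype As] [DecidableEq As] [Fintype Bs] [DecidableEq Bs]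
    [Fintype Cs] [DecidableEq Cs]
    -- the MERA isometry `V : H_s → H_0` with non-overlapping causal cones for `A` and `C`
    (V : Matrix (A × (B × C)) (As × (Bs × Cs)) ℂ) (hV : Vᴴ * V = 1)
    (ΦA : Matrix A A ℂ →ₗ[ℂ] Matrix As As ℂ) (ΦC : Matrix C C ℂ →ₗ[ℂ] Matrix Cs Cs ℂ)
    (hloc : ∀ (OA : Matrix A A ℂ) (OC : Matrix C C ℂ),
      Vᴴ * (OA ⊗ₖ ((1 : Matrix B B ℂ) ⊗ₖ OC)) * V
        = ΦA OA ⊗ₖ ((1 : Matrix Bs Bs ℂ) ⊗ₖ ΦC OC))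
    (ρs : Matrix (As × (Bs × Cs)) (As × (Bs × Cs)) ℂ)
    (hρ : ρs.PosSemidef)
    (U : Matrix (As × (Bs × Cs)) (As × (Bs × Cs)) ℂ)
    (OACR : Matrix (A × (C × (As × (Bs × Cs)))) (A × (C × (As × (Bs × Cs)))) ℂ) :
    let Ω : (As × (Bs × Cs)) × (As × (Bs × Cs)) → ℂ := fun p => if p.1 = p.2 then 1 else 0
    let ρsVec : (As × (Bs × Cs)) × (As × (Bs × Cs)) → ℂ := (((hρ.1.eigenvectorUnitary : Matrix (As × (Bs × Cs)) (As × (Bs × Cs)) ℂ) *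
      Matrix.diagonal ((↑) ∘ Real.sqrt ∘ hρ.1.eigenvalues) *
      (star hρ.1.eigenvectorUnitary : Matrix (As × (Bs × Cs)) (As × (Bs × Cs)) ℂ)) ⊗ₖ U).mulVec Ω
    let ρ0Vec : (A × (B × C)) × (As × (Bs × Cs)) → ℂ :=
      (V ⊗ₖ (1 : Matrix (As × (Bs × Cs)) (As × (Bs × Cs)) ℂ)).mulVec ρsVec
    -- reduced states of `|ρ_0⟩⟨ρ_0|`
    let ρ0A : Matrix A A ℂ :=
      Matrix.of fun a a' => ∑ b : B, ∑ c : C, ∑ r : As × (Bs × Cs),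
        outer ρ0Vec ((a, (b, c)), r) ((a', (b, c)), r)
    let ρ0CR : Matrix (C × (As × (Bs × Cs))) (C × (As × (Bs × Cs))) ℂ :=
      Matrix.of fun p q => ∑ a : A, ∑ b : B,
        outer ρ0Vec ((a, (b, p.1)), p.2) ((a, (b, q.1)), q.2)
    -- reduced states of `|ρ_s⟩⟨ρ_s|`
    let ρsAs : Matrix As As ℂ :=
      Matrix.of fun a a' => ∑ b : Bs, ∑ c : Cs, ∑ r : As × (Bs × Cs),
        outer ρsVec ((a, (b, c)), r) ((a', (b, c)), r)
    let ρsCsR : Matrix (Cs × (As × (Bs × Cs))) (Cs × (As × (Bs × Cs))) ℂ :=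
      Matrix.of fun p q => ∑ a : As, ∑ b : Bs,
        outer ρsVec ((a, (b, p.1)), p.2) ((a, (b, q.1)), q.2)
    -- the extension `Φ_A ⊗ Φ_C ⊗ id_R`, acting blockwise
    let ΦACR : Matrix (A × (C × (As × (Bs × Cs)))) (A × (C × (As × (Bs × Cs)))) ℂ →
        Matrix (As × (Cs × (As × (Bs × Cs)))) (As × (Cs × (As × (Bs × Cs)))) ℂ :=
      fun O => Matrix.of fun p q =>
        (ΦC (Matrix.of fun c e =>
          (ΦA (Matrix.of fun a b => O (a, (c, p.2.2)) (b, (e, q.2.2)))) p.1 q.1)) p.2.1 q.2.1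
    ((ρ0A ⊗ₖ ρ0CR) * OACR).trace = ((ρsAs ⊗ₖ ρsCsR) * ΦACR OACR).trace := by
  intro Ω ρsVec ρ0Vec ρ0A ρ0CR ρsAs ρsCsR ΦACR
  have hΩ : Ω = vec (1 : Matrix (As × (Bs × Cs)) (As × (Bs × Cs)) ℂ)ᵀ :=
    funext fun p => Matrix.one_apply.symm
  obtain ⟨W, hψs⟩ : ∃ W, ρsVec = vec Wᵀ :=
    ⟨_, by rw [show ρsVec = (_ ⊗ₖ U) *ᵥ Ω from rfl, hΩ, kronecker_mulVec_vec_transpose]⟩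
  have hψ0 : ρ0Vec = vec (V * W)ᵀ := by
    rw [show ρ0Vec = (V ⊗ₖ 1) *ᵥ ρsVec from rfl, hψs, kronecker_mulVec_vec_transpose,
      transpose_one, Matrix.mul_one]
  change ((traceOutBCR ρ0Vec ⊗ₖ traceOutAB ρ0Vec) * OACR).trace
    = ((traceOutBCR ρsVec ⊗ₖ traceOutAB ρsVec) * tensorMapId ΦA ΦC OACR).trace
  rw [hψ0, hψs]
  exact NonOverlappingCausalCones.trace_traceOut_kronecker_mul hloc hV W OACR

/-- clustering identity, general form. With non-overlapping causal cones,
`tr[(ρ_0^A ⊗ ρ_0^{CR}) O_{ACR}] = tr[(ρ_s^{A_s} ⊗ ρ_s^{C_sR}) (Φ_A ⊗ Φ_C ⊗ id_R)(O_{ACR})]`. -/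
theorem mera_clustering_identity_general
    {A B C As Bs Cs : Type} [Fintype A] [DecidableEq A] [Fintype B] [DecidableEq B]
    [Fintype C] [DecidableEq C] [Fintype As] [DecidableEq As] [Fintype Bs] [DecidableEq Bs]
    [Fintype Cs] [DecidableEq Cs]
    -- the MERA isometry `V : H_s → H_0` with non-overlapping causal cones for `A` and `C`
    (V : Matrix (A × (B × C)) (As × (Bs × Cs)) ℂ) (hV : Vᴴ * V = 1)
    (ΦA : Matrix A A ℂ →ₗ[ℂ] Matrix As As ℂ) (ΦC : Matrix C C ℂ →ₗ[ℂ] Matrix Cs Cs ℂ)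
    (hloc : ∀ (OA : Matrix A A ℂ) (OC : Matrix C C ℂ),
      Vᴴ * (OA ⊗ₖ ((1 : Matrix B B ℂ) ⊗ₖ OC)) * V
        = ΦA OA ⊗ₖ ((1 : Matrix Bs Bs ℂ) ⊗ₖ ΦC OC))
    (ρs : Matrix (As × (Bs × Cs)) (As × (Bs × Cs)) ℂ)
    (hρ : ρs.PosSemidef) (hρtr : ρs.trace = 1)
    (U : Matrix (As × (Bs × Cs)) (As × (Bs × Cs)) ℂ)
    (hU : U ∈ Matrix.unitaryGroup (As × (Bs × Cs)) ℂ)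
    (OACR : Matrix (A × (C × (As × (Bs × Cs)))) (A × (C × (As × (Bs × Cs)))) ℂ) :
    let Ω : (As × (Bs × Cs)) × (As × (Bs × Cs)) → ℂ := fun p => if p.1 = p.2 then 1 else 0
    let ρsVec : (As × (Bs × Cs)) × (As × (Bs × Cs)) → ℂ := (((hρ.1.eigenvectorUnitary : Matrix (As × (Bs × Cs)) (As × (Bs × Cs)) ℂ) *
      Matrix.diagonal ((↑) ∘ Real.sqrt ∘ hρ.1.eigenvalues) *
      (star hρ.1.eigenvectorUnitary : Matrix (As × (Bs × Cs)) (As × (Bs × Cs)) ℂ)) ⊗ₖ U).mulVec Ω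
    let ρ0Vec : (A × (B × C)) × (As × (Bs × Cs)) → ℂ :=
      (V ⊗ₖ (1 : Matrix (As × (Bs × Cs)) (As × (Bs × Cs)) ℂ)).mulVec ρsVec
    -- reduced states of `|ρ_0⟩⟨ρ_0|`
    let ρ0A : Matrix A A ℂ :=
      Matrix.of fun a a' => ∑ b : B, ∑ c : C, ∑ r : As × (Bs × Cs),
        outer ρ0Vec ((a, (b, c)), r) ((a', (b, c)), r)
    let ρ0CR : Matrix (C × (As × (Bs × Cs))) (C × (As × (Bs × Cs))) ℂ :=
      Matrix.of fun p q => ∑ a : A, ∑ b : B,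
        outer ρ0Vec ((a, (b, p.1)), p.2) ((a, (b, q.1)), q.2)
    -- reduced states of `|ρ_s⟩⟨ρ_s|`
    let ρsAs : Matrix As As ℂ :=
      Matrix.of fun a a' => ∑ b : Bs, ∑ c : Cs, ∑ r : As × (Bs × Cs),
        outer ρsVec ((a, (b, c)), r) ((a', (b, c)), r)
    let ρsCsR : Matrix (Cs × (As × (Bs × Cs))) (Cs × (As × (Bs × Cs))) ℂ :=
      Matrix.of fun p q => ∑ a : As, ∑ b : Bs,
        outer ρsVec ((a, (b, p.1)), p.2) ((a, (b, q.1)), q.2)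
    -- the extension `Φ_A ⊗ Φ_C ⊗ id_R`, acting blockwise
    let ΦACR : Matrix (A × (C × (As × (Bs × Cs)))) (A × (C × (As × (Bs × Cs)))) ℂ →
        Matrix (As × (Cs × (As × (Bs × Cs)))) (As × (Cs × (As × (Bs × Cs)))) ℂ :=
      fun O => Matrix.of fun p q =>
        (ΦC (Matrix.of fun c e =>
          (ΦA (Matrix.of fun a b => O (a, (c, p.2.2)) (b, (e, q.2.2)))) p.1 q.1)) p.2.1 q.2.1
    ((ρ0A ⊗ₖ ρ0CR) * OACR).trace = ((ρsAs ⊗ₖ ρsCsR) * ΦACR OACR).trace :=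
  mera_clustering_identity_general_general V hV ΦA ΦC hloc ρs hρ U OACR
end

section
/- (Core estimate for the emergent light cone.) Let Φ be a gapped transfer operator on M_d(ℂ) as below, let H_E be a finite-dimensional Hilbert space, and let u, u', w, w' ∈ ℂ^d ⊗ H_E be vectors of norm at most 1 such that ⟨u, (1_d ⊗ Y) w'⟩ = ⟨u', (1_d ⊗ Y) w⟩ for every operator Y ∈ B(H_E). Then for every integer m ≥ 1 and all operators O ∈ M_d(ℂ) and Y ∈ B(H_E): |⟨u, (Φ^m(O) ⊗ Y) w'⟩ − ⟨u', (Φ^m(O) ⊗ Y) w⟩| ≤ 2K ‖O‖ ‖Y‖ 2^{−νm}. -/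
/-!
Iterating the spectral form gives `Φ^m(O) = ∑ₖ λₖ^m tr(O Rₖ) Lₖ` for `m ≥ 1`, and
`D(A) = ⟨u, (A ⊗ Y) w'⟩ - ⟨u', (A ⊗ Y) w⟩` is linear in `A`, so the difference to bound is
`∑ₖ λₖ^m tr(O Rₖ) D(Lₖ)`. The term `k = 0` vanishes since `L₀ = 1` and the vectors match on
`1 ⊗ Y`. For `k ≠ 0`, the gap and Hölder's inequality `|tr(O Rₖ)| ≤ ‖O‖ ‖Rₖ‖₁` bound the
coefficient by `2^{-νm} ‖O‖`, while `‖Lₖ ⊗ Y‖ ≤ ‖Lₖ‖ ‖Y‖` bounds `|D(Lₖ)|` by `2 ‖Y‖`.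
-/

open scoped Kronecker ComplexOrder Matrix Classical

open Matrix WithLp

section EuclideanNorm

variable {n : Type} [Fintype n]

lemma norm_toLp_sq (x : n → ℂ) : ‖toLp 2 x‖ ^ 2 = ∑ i, Complex.normSq (x i) := by
  simp [EuclideanSpace.norm_sq_eq, Complex.sq_norm]

lemma norm_toLp_le_one {x : n → ℂ} (hx : ∑ i, Complex.normSq (x i) ≤ 1) : ‖toLp 2 x‖ ≤ 1 := by
  rw [← norm_toLp_sq] at hx
  exact (sq_le_one_iff₀ (norm_nonneg _)).1 hx

lemma norm_toLp_comp_equiv {m : Type} [Fintype m] (x : n → ℂ) (e : m ≃ n) :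
    ‖toLp 2 (x ∘ e)‖ = ‖toLp 2 x‖ := by
  simp only [EuclideanSpace.norm_eq, Function.comp_apply, e.sum_comp (fun i => ‖x i‖ ^ 2)]

lemma norm_toLp_sq_eq_sum_slices {o : Type} [Fintype o] (x : n × o → ℂ) :
    ‖toLp 2 x‖ ^ 2 = ∑ k, ‖toLp 2 (fun i => x (i, k))‖ ^ 2 := by
  simp only [norm_toLp_sq, Fintype.sum_prod_type]
  exact Finset.sum_comm

variable [DecidableEq n]

lemma opNorm_nonneg (A : Matrix n n ℂ) : 0 ≤ opNorm A := norm_nonneg _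

lemma norm_toLp_mulVec_le (A : Matrix n n ℂ) (x : n → ℂ) :
    ‖toLp 2 (A *ᵥ x)‖ ≤ opNorm A * ‖toLp 2 x‖ :=
  (toEuclideanCLM (𝕜 := ℂ) A).le_opNorm (toLp 2 x)

lemma opNorm_le_of_norm_mulVec_le {A : Matrix n n ℂ} {c : ℝ} (hc : 0 ≤ c)
    (hA : ∀ x, ‖toLp 2 (A *ᵥ x)‖ ≤ c * ‖toLp 2 x‖) : opNorm A ≤ c :=
  (toEuclideanCLM (𝕜 := ℂ) A).opNorm_le_bound hc fun x => hA (ofLp x)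

lemma opNorm_mul_le (A B : Matrix n n ℂ) : opNorm (A * B) ≤ opNorm A * opNorm B := by
  simpa only [opNorm, map_mul] using norm_mul_le _ _

lemma norm_star_dotProduct_mulVec_le (A : Matrix n n ℂ) (x y : n → ℂ) :
    ‖star x ⬝ᵥ A *ᵥ y‖ ≤ ‖toLp 2 x‖ * opNorm A * ‖toLp 2 y‖ := by
  calc ‖star x ⬝ᵥ A *ᵥ y‖ = ‖inner ℂ (toLp 2 x) (toLp 2 (A *ᵥ y))‖ := by
        rw [EuclideanSpace.inner_eq_star_dotProduct, dotProduct_comm]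
    _ ≤ ‖toLp 2 x‖ * ‖toLp 2 (A *ᵥ y)‖ := norm_inner_le_norm _ _
    _ ≤ ‖toLp 2 x‖ * (opNorm A * ‖toLp 2 y‖) := by gcongr; exact norm_toLp_mulVec_le A y
    _ = ‖toLp 2 x‖ * opNorm A * ‖toLp 2 y‖ := (mul_assoc _ _ _).symm

end EuclideanNorm

section Kronecker

variable {m o : Type} [Fintype m] [DecidableEq m] [Fintype o] [DecidableEq o]

lemma opNorm_blockDiagonal_le {M : o → Matrix m m ℂ} {c : ℝ} (hc : 0 ≤ c)
    (hM : ∀ k, opNorm (M k) ≤ c) : opNorm (blockDiagonal M) ≤ c := by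
  refine opNorm_le_of_norm_mulVec_le hc fun x => ?_
  have hslice : ∀ k, (fun i => (blockDiagonal M *ᵥ x) (i, k)) = M k *ᵥ fun i => x (i, k) := by
    intro k
    funext i
    simp only [mulVec, dotProduct, Fintype.sum_prod_type, blockDiagonal_apply]
    rw [Finset.sum_comm, Finset.sum_eq_single k (fun l _ hl => by simp [Ne.symm hl]) (by simp)]
    simp
  refine (sq_le_sq₀ (norm_nonneg _) (by positivity)).1 ?_
  rw [mul_pow, norm_toLp_sq_eq_sum_slices, norm_toLp_sq_eq_sum_slices, Finset.mul_sum]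
  gcongr with k
  rw [hslice, ← mul_pow]
  gcongr
  exact (norm_toLp_mulVec_le _ _).trans (by gcongr; exact hM k)

lemma opNorm_reindex_le (e : m ≃ o) (A : Matrix m m ℂ) : opNorm (reindex e e A) ≤ opNorm A :=
  opNorm_le_of_norm_mulVec_le (opNorm_nonneg A) fun x => by
    rw [reindex_apply, submatrix_mulVec_equiv, norm_toLp_comp_equiv, Equiv.symm_symm,
      ← norm_toLp_comp_equiv x e]
    exact norm_toLp_mulVec_le A (x ∘ e)

lemma opNorm_kronecker_le (A : Matrix m m ℂ) (Y : Matrix o o ℂ) :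
    opNorm (A ⊗ₖ Y) ≤ opNorm A * opNorm Y := by
  have hsplit : A ⊗ₖ Y = (A ⊗ₖ (1 : Matrix o o ℂ)) * ((1 : Matrix m m ℂ) ⊗ₖ Y) := by
    rw [← mul_kronecker_mul, Matrix.mul_one, Matrix.one_mul]
  have hA : opNorm (A ⊗ₖ (1 : Matrix o o ℂ)) ≤ opNorm A := by
    rw [kronecker_one]
    exact opNorm_blockDiagonal_le (opNorm_nonneg A) fun _ => le_rfl
  have hY : opNorm ((1 : Matrix m m ℂ) ⊗ₖ Y) ≤ opNorm Y := by
    rw [one_kronecker]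
    exact (opNorm_reindex_le _ _).trans (opNorm_blockDiagonal_le (opNorm_nonneg Y) fun _ => le_rfl)
  rw [hsplit]
  exact (opNorm_mul_le _ _).trans (mul_le_mul hA hY (opNorm_nonneg _) (opNorm_nonneg A))

end Kronecker

section TraceNorm

variable {n : Type} [Fintype n] [DecidableEq n]

lemma trace_eq_sum_star_dotProduct_mulVec {ι : Type} [Fintype ι] (M : Matrix n n ℂ)
    (b : OrthonormalBasis ι ℂ (EuclideanSpace ℂ n)) :
    M.trace = ∑ i, star ⇑(b i) ⬝ᵥ M *ᵥ ⇑(b i) := by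
  rw [← trace_toLin_eq M (EuclideanSpace.basisFun n ℂ).toBasis, ← toEuclideanLin_eq_toLin_orthonormal,
    LinearMap.trace_eq_sum_inner _ b]
  refine Finset.sum_congr rfl fun i _ => ?_
  rw [EuclideanSpace.inner_eq_star_dotProduct, dotProduct_comm]
  rfl

lemma traceNorm_eq_sum_sqrt_eigenvalues (B : Matrix n n ℂ) :
    traceNorm B = ∑ i, √((posSemidef_conjTranspose_mul_self B).1.eigenvalues i) := by
  have hB := posSemidef_conjTranspose_mul_self B
  have hU := Matrix.mem_unitaryGroup_iff'.mp hB.1.eigenvectorUnitary.2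
  rw [traceNorm, psdSqrt, dif_pos hB, trace_mul_cycle, hU, Matrix.one_mul, trace_diagonal,
    Complex.re_sum]
  simp

lemma norm_toLp_mulVec_eigenvectorBasis (B : Matrix n n ℂ) (i : n) :
    ‖toLp 2 (B *ᵥ ⇑((posSemidef_conjTranspose_mul_self B).1.eigenvectorBasis i))‖
      = √((posSemidef_conjTranspose_mul_self B).1.eigenvalues i) := by
  set hB := (posSemidef_conjTranspose_mul_self B).1
  rw [hB.eigenvalues_eq, ← mulVec_mulVec, dotProduct_mulVec, ← star_mulVec,
    ← Real.sqrt_sq (norm_nonneg _), norm_sq_eq_re_inner (𝕜 := ℂ),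
    EuclideanSpace.inner_eq_star_dotProduct, dotProduct_comm]

theorem norm_trace_mul_le_opNorm_mul_traceNorm (A B : Matrix n n ℂ) :
    ‖(A * B).trace‖ ≤ opNorm A * traceNorm B := by
  set hB := (posSemidef_conjTranspose_mul_self B).1
  set b := hB.eigenvectorBasis
  rw [trace_eq_sum_star_dotProduct_mulVec _ b, traceNorm_eq_sum_sqrt_eigenvalues, Finset.mul_sum]
  refine (norm_sum_le _ _).trans (Finset.sum_le_sum fun i _ => ?_)
  calc ‖star ⇑(b i) ⬝ᵥ (A * B) *ᵥ ⇑(b i)‖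
      = ‖star ⇑(b i) ⬝ᵥ A *ᵥ (B *ᵥ ⇑(b i))‖ := by rw [mulVec_mulVec]
    _ ≤ ‖toLp 2 ⇑(b i)‖ * opNorm A * ‖toLp 2 (B *ᵥ ⇑(b i))‖ :=
        norm_star_dotProduct_mulVec_le _ _ _
    _ = opNorm A * √(hB.eigenvalues i) := by
        rw [norm_toLp_mulVec_eigenvectorBasis, toLp_ofLp, b.orthonormal.1 i, one_mul]

end TraceNorm

section SpectralForm

variable {n ι : Type} [Fintype n] [Fintype ι] [DecidableEq ι]
  {lam : ι → ℂ} {L R : ι → Matrix n n ℂ} {Φ : Matrix n n ℂ → Matrix n n ℂ}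

lemma spectralForm_apply_sum_smul (hbi : ∀ k l, (L k * R l).trace = if k = l then 1 else 0)
    (hΦ : ∀ O, Φ O = ∑ k, (lam k * (O * R k).trace) • L k) (c : ι → ℂ) :
    Φ (∑ k, c k • L k) = ∑ k, (lam k * c k) • L k := by
  have hcoeff : ∀ l, ((∑ k, c k • L k) * R l).trace = c l := fun l => by
    simp [Finset.sum_mul, trace_sum, hbi]
  simp only [hΦ, hcoeff]

lemma spectralForm_iterate_sum_smul (hbi : ∀ k l, (L k * R l).trace = if k = l then 1 else 0)
    (hΦ : ∀ O, Φ O = ∑ k, (lam k * (O * R k).trace) • L k) (c : ι → ℂ) (j : ℕ) :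
    Φ^[j] (∑ k, c k • L k) = ∑ k, (lam k ^ j * c k) • L k := by
  induction j with
  | zero => simp
  | succ j ih =>
    rw [Function.iterate_succ_apply', ih, spectralForm_apply_sum_smul hbi hΦ]
    simp only [pow_succ, mul_assoc, mul_left_comm (lam _)]

lemma spectralForm_iterate_eq_sum (hbi : ∀ k l, (L k * R l).trace = if k = l then 1 else 0)
    (hΦ : ∀ O, Φ O = ∑ k, (lam k * (O * R k).trace) • L k) {m : ℕ} (hm : m ≠ 0)
    (O : Matrix n n ℂ) : Φ^[m] O = ∑ k, (lam k ^ m * (O * R k).trace) • L k := by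
  obtain ⟨j, rfl⟩ := Nat.exists_eq_succ_of_ne_zero hm
  rw [Function.iterate_succ_apply, hΦ, spectralForm_iterate_sum_smul hbi hΦ]
  simp only [pow_succ, mul_assoc]

end SpectralForm

lemma norm_pow_mul_trace_le {n : Type} [Fintype n] [DecidableEq n] {ν : ℝ} {l : ℂ}
    (hl : ‖l‖ ≤ (2 : ℝ) ^ (-ν)) {R : Matrix n n ℂ} (hR : traceNorm R ≤ 1) (O : Matrix n n ℂ)
    (m : ℕ) : ‖l ^ m * (O * R).trace‖ ≤ (2 : ℝ) ^ (-(ν * m)) * opNorm O := by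
  rw [norm_mul, norm_pow, ← neg_mul, Real.rpow_mul_natCast zero_le_two]
  gcongr
  calc ‖(O * R).trace‖ ≤ opNorm O * traceNorm R := norm_trace_mul_le_opNorm_mul_traceNorm O R
    _ ≤ opNorm O := mul_le_of_le_one_right (opNorm_nonneg O) hR

section KroneckerMatrixElement

variable {m o : Type} [Fintype m] [Fintype o]

def kroneckerMatrixElement (x y : m × o → ℂ) (Y : Matrix o o ℂ) : Matrix m m ℂ →ₗ[ℂ] ℂ where
  toFun M := star x ⬝ᵥ (M ⊗ₖ Y) *ᵥ y
  map_add' M N := by simp only [add_kronecker, add_mulVec, dotProduct_add]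
  map_smul' c M := by simp only [smul_kronecker, smul_mulVec, dotProduct_smul, RingHom.id_apply]

lemma kroneckerMatrixElement_apply (x y : m × o → ℂ) (Y : Matrix o o ℂ) (M : Matrix m m ℂ) :
    kroneckerMatrixElement x y Y M = star x ⬝ᵥ (M ⊗ₖ Y) *ᵥ y := rfl

lemma norm_kroneckerMatrixElement_le [DecidableEq m] [DecidableEq o] {x y : m × o → ℂ}
    (hx : ‖toLp 2 x‖ ≤ 1) (hy : ‖toLp 2 y‖ ≤ 1) (Y : Matrix o o ℂ) {M : Matrix m m ℂ}
    (hM : opNorm M ≤ 1) : ‖kroneckerMatrixElement x y Y M‖ ≤ opNorm Y := by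
  have hMY := opNorm_nonneg (M ⊗ₖ Y)
  calc ‖star x ⬝ᵥ (M ⊗ₖ Y) *ᵥ y‖ ≤ ‖toLp 2 x‖ * opNorm (M ⊗ₖ Y) * ‖toLp 2 y‖ :=
        norm_star_dotProduct_mulVec_le _ _ _
    _ ≤ opNorm (M ⊗ₖ Y) :=
        (mul_le_of_le_one_right (by positivity) hy).trans (mul_le_of_le_one_left hMY hx)
    _ ≤ opNorm M * opNorm Y := opNorm_kronecker_le M Y
    _ ≤ opNorm Y := mul_le_of_le_one_left (opNorm_nonneg Y) hM

end KroneckerMatrixElement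

lemma norm_sum_mul_le_of_apply_zero_eq_zero {K : ℕ} {c t : Fin (K + 1) → ℂ} (ht0 : t 0 = 0)
    {a b : ℝ} (ha : 0 ≤ a) (hc : ∀ k, k ≠ 0 → ‖c k‖ ≤ a) (ht : ∀ k, k ≠ 0 → ‖t k‖ ≤ b) :
    ‖∑ k, c k * t k‖ ≤ K * (a * b) := by
  rw [Fin.sum_univ_succ, ht0, mul_zero, zero_add]
  calc ‖∑ i : Fin K, c i.succ * t i.succ‖ ≤ ∑ _i : Fin K, a * b := by
        refine (norm_sum_le _ _).trans (Finset.sum_le_sum fun i _ => ?_)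
        rw [norm_mul]
        exact mul_le_mul (hc _ i.succ_ne_zero) (ht _ i.succ_ne_zero) (norm_nonneg _) ha
    _ = K * (a * b) := by simp

theorem emergent_lightcone_core_estimate_general
    {d K : ℕ} {E : Type} [Fintype E] [DecidableEq E]
    (ν : ℝ)
    (lam : Fin (K + 1) → ℂ) (L R : Fin (K + 1) → Matrix (Fin d) (Fin d) ℂ)
    (hL0 : L 0 = 1)
    (hbi : ∀ k l, (L k * R l).trace = if k = l then 1 else 0)
    (hLnorm : ∀ k, opNorm (L k) ≤ 1) (hRnorm : ∀ k, traceNorm (R k) ≤ 1)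
    (hgap : ∀ k, k ≠ 0 → ‖lam k‖ ≤ (2 : ℝ) ^ (-ν))
    (Φ : Matrix (Fin d) (Fin d) ℂ → Matrix (Fin d) (Fin d) ℂ)
    (hΦ : ∀ O, Φ O = ∑ k, (lam k * (O * R k).trace) • L k)
    (u u' w w' : Fin d × E → ℂ)
    (hu : ∑ i, Complex.normSq (u i) ≤ 1) (hu' : ∑ i, Complex.normSq (u' i) ≤ 1)
    (hw : ∑ i, Complex.normSq (w i) ≤ 1) (hw' : ∑ i, Complex.normSq (w' i) ≤ 1)
    (hmatch : ∀ Y : Matrix E E ℂ,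
      star u ⬝ᵥ ((1 : Matrix (Fin d) (Fin d) ℂ) ⊗ₖ Y).mulVec w'
        = star u' ⬝ᵥ ((1 : Matrix (Fin d) (Fin d) ℂ) ⊗ₖ Y).mulVec w)
    (m : ℕ) (hm : 1 ≤ m)
    (O : Matrix (Fin d) (Fin d) ℂ) (Y : Matrix E E ℂ) :
    ‖star u ⬝ᵥ ((Φ^[m] O) ⊗ₖ Y).mulVec w'
        - star u' ⬝ᵥ ((Φ^[m] O) ⊗ₖ Y).mulVec w‖
      ≤ 2 * K * opNorm O * opNorm Y * (2 : ℝ) ^ (-(ν * m)) := by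
  set D := kroneckerMatrixElement u w' Y - kroneckerMatrixElement u' w Y
  have hD : ∀ k, ‖D (L k)‖ ≤ 2 * opNorm Y := fun k =>
    (norm_sub_le _ _).trans <| by
      linarith [norm_kroneckerMatrixElement_le (norm_toLp_le_one hu) (norm_toLp_le_one hw') Y
          (hLnorm k),
        norm_kroneckerMatrixElement_le (norm_toLp_le_one hu') (norm_toLp_le_one hw) Y (hLnorm k)]
  have hD0 : D (L 0) = 0 := by
    simp only [D, LinearMap.sub_apply, kroneckerMatrixElement_apply, hL0, hmatch Y, sub_self]
  change ‖D (Φ^[m] O)‖ ≤ _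
  rw [spectralForm_iterate_eq_sum hbi hΦ (by omega), map_sum]
  simp only [map_smul, smul_eq_mul]
  calc _ ≤ K * (((2 : ℝ) ^ (-(ν * m)) * opNorm O) * (2 * opNorm Y)) :=
        norm_sum_mul_le_of_apply_zero_eq_zero hD0 (by positivity [opNorm_nonneg O])
          (fun k hk => norm_pow_mul_trace_le (hgap k hk) (hRnorm k) O m) fun k _ => hD k
    _ = _ := by ring

/-- core estimate for the emergent light cone. For a gapped transfer
operator `Φ` on `M_d(ℂ)` and vectors `u, u', w, w'` of norm at most one with
`⟨u,(1 ⊗ Y)w'⟩ = ⟨u',(1 ⊗ Y)w⟩` for all `Y`, one has for every `m ≥ 1`: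
`|⟨u,(Φ^m(O) ⊗ Y)w'⟩ − ⟨u',(Φ^m(O) ⊗ Y)w⟩| ≤ 2K ‖O‖ ‖Y‖ 2^{−νm}`. -/
theorem emergent_lightcone_core_estimate
    {d K : ℕ} {E : Type} [Fintype E] [DecidableEq E]
    (ν : ℝ) (hν : 0 < ν)
    (lam : Fin (K + 1) → ℂ) (L R : Fin (K + 1) → Matrix (Fin d) (Fin d) ℂ)
    (hlam0 : lam 0 = 1) (hL0 : L 0 = 1)
    (hbi : ∀ k l, (L k * R l).trace = if k = l then 1 else 0)
    (hLnorm : ∀ k, opNorm (L k) ≤ 1) (hRnorm : ∀ k, traceNorm (R k) ≤ 1)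
    (hgap : ∀ k, k ≠ 0 → ‖lam k‖ ≤ (2 : ℝ) ^ (-ν))
    (Φ : Matrix (Fin d) (Fin d) ℂ → Matrix (Fin d) (Fin d) ℂ)
    (hΦ : ∀ O, Φ O = ∑ k, (lam k * (O * R k).trace) • L k)
    (u u' w w' : Fin d × E → ℂ)
    (hu : ∑ i, Complex.normSq (u i) ≤ 1) (hu' : ∑ i, Complex.normSq (u' i) ≤ 1)
    (hw : ∑ i, Complex.normSq (w i) ≤ 1) (hw' : ∑ i, Complex.normSq (w' i) ≤ 1)
    (hmatch : ∀ Y : Matrix E E ℂ,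
      star u ⬝ᵥ ((1 : Matrix (Fin d) (Fin d) ℂ) ⊗ₖ Y).mulVec w'
        = star u' ⬝ᵥ ((1 : Matrix (Fin d) (Fin d) ℂ) ⊗ₖ Y).mulVec w)
    (m : ℕ) (hm : 1 ≤ m)
    (O : Matrix (Fin d) (Fin d) ℂ) (Y : Matrix E E ℂ) :
    ‖star u ⬝ᵥ ((Φ^[m] O) ⊗ₖ Y).mulVec w'
        - star u' ⬝ᵥ ((Φ^[m] O) ⊗ₖ Y).mulVec w‖
      ≤ 2 * K * opNorm O * opNorm Y * (2 : ℝ) ^ (-(ν * m)) :=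
  emergent_lightcone_core_estimate_general ν lam L R hL0 hbi hLnorm hRnorm hgap Φ hΦ u u' w w' hu
    hu' hw hw' hmatch m hm O Y
end
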